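/- The map S₁(x₁,x₂,y₁,y₂,z₁,z₂,t₁,t₂) = (x₁y₁z₂/(x₂z₁+x₁z₂), y₂, (x₂z₁+x₁z₂)/z₂, x₂, t₂x₂y₁z₁/(y₂(x₂z₁+x₁z₂)), t₂, t₁x₂z₂/(t₂y₂), z₂) satisfies the set-theoretical 4-simplex equation wherever all denominators are nonzero. -/

import Mathlib

/-- The Hirota-type 4-simplex map `S₁`. -/
noncomputable def hirotaS1 :
    (ℂ × ℂ) × (ℂ × ℂ) × (ℂ × ℂ) × (ℂ × ℂ) → (ℂ × ℂ) × (ℂ × ℂ) × (ℂ × ℂ) × (ℂ × ℂ) :=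
  fun ((x1, x2), (y1, y2), (z1, z2), (t1, t2)) =>
    ((x1 * y1 * z2 / (x2 * z1 + x1 * z2), y2),
     ((x2 * z1 + x1 * z2) / z2, x2),
     (t2 * x2 * y1 * z1 / (y2 * (x2 * z1 + x1 * z2)), t2),
     (t1 * x2 * z2 / (t2 * y2), z2))

/-- All denominators occurring in the Hirota-type map `S₁` are nonzero. -/
def hirotaS1Ok : (ℂ × ℂ) × (ℂ × ℂ) × (ℂ × ℂ) × (ℂ × ℂ) → Prop :=
  fun ((x1, x2), (y1, y2), (z1, z2), (t1, t2)) =>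
    x2 * z1 + x1 * z2 ≠ 0 ∧ z2 ≠ 0 ∧ y2 ≠ 0 ∧ t2 ≠ 0

section Lifts
variable {X : Type*} (S : X × X × X × X → X × X × X × X)

/-- `S` acting on factors 1,2,3,4 of a 10-tuple. -/
def lift1234 : X × X × X × X × X × X × X × X × X × X → X × X × X × X × X × X × X × X × X × X :=
  fun (p1, p2, p3, p4, p5, p6, p7, p8, p9, p10) =>
    let q := S (p1, p2, p3, p4)
    (q.1, q.2.1, q.2.2.1, q.2.2.2, p5, p6, p7, p8, p9, p10)

/-- `S` acting on factors 1,5,6,7 of a 10-tuple. -/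
def lift1567 : X × X × X × X × X × X × X × X × X × X → X × X × X × X × X × X × X × X × X × X :=
  fun (p1, p2, p3, p4, p5, p6, p7, p8, p9, p10) =>
    let q := S (p1, p5, p6, p7)
    (q.1, p2, p3, p4, q.2.1, q.2.2.1, q.2.2.2, p8, p9, p10)

/-- `S` acting on factors 2,5,8,9 of a 10-tuple. -/
def lift2589 : X × X × X × X × X × X × X × X × X × X → X × X × X × X × X × X × X × X × X × X :=
  fun (p1, p2, p3, p4, p5, p6, p7, p8, p9, p10) =>
    let q := S (p2, p5, p8, p9)
    (p1, q.1, p3, p4, q.2.1, p6, p7, q.2.2.1, q.2.2.2, p10)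

/-- `S` acting on factors 3,6,8,10 of a 10-tuple. -/
def lift368X : X × X × X × X × X × X × X × X × X × X → X × X × X × X × X × X × X × X × X × X :=
  fun (p1, p2, p3, p4, p5, p6, p7, p8, p9, p10) =>
    let q := S (p3, p6, p8, p10)
    (p1, p2, q.1, p4, p5, q.2.1, p7, q.2.2.1, p9, q.2.2.2)

/-- `S` acting on factors 4,7,9,10 of a 10-tuple. -/
def lift479X : X × X × X × X × X × X × X × X × X × X → X × X × X × X × X × X × X × X × X × X :=
  fun (p1, p2, p3, p4, p5, p6, p7, p8, p9, p10) =>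
    let q := S (p4, p7, p9, p10)
    (p1, p2, p3, q.1, p5, p6, q.2.1, p8, q.2.2.1, q.2.2.2)

end Lifts

section Projs
variable {X : Type*}

/-- Projection on factors 1,2,3,4. -/
def proj1234 : X × X × X × X × X × X × X × X × X × X → X × X × X × X :=
  fun (p1, p2, p3, p4, _, _, _, _, _, _) => (p1, p2, p3, p4)

/-- Projection on factors 1,5,6,7. -/
def proj1567 : X × X × X × X × X × X × X × X × X × X → X × X × X × X :=
  fun (p1, _, _, _, p5, p6, p7, _, _, _) => (p1, p5, p6, p7)

/-- Projection on factors 2,5,8,9. -/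
def proj2589 : X × X × X × X × X × X × X × X × X × X → X × X × X × X :=
  fun (_, p2, _, _, p5, _, _, p8, p9, _) => (p2, p5, p8, p9)

/-- Projection on factors 3,6,8,10. -/
def proj368X : X × X × X × X × X × X × X × X × X × X → X × X × X × X :=
  fun (_, _, p3, _, _, p6, _, p8, _, p10) => (p3, p6, p8, p10)

/-- Projection on factors 4,7,9,10. -/
def proj479X : X × X × X × X × X × X × X × X × X × X → X × X × X × X :=
  fun (_, _, _, p4, _, _, p7, _, p9, p10) => (p4, p7, p9, p10)

end Projs

/-!
`S₁` only permutes the second components, so the work is in the first components. Both sides of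
the equation equal one explicit tuple, whose entries are monomials divided by products of four
polynomials `P, Q, R, T` of the input. On either side, the denominator `x₂z₁ + x₁z₂` of each of
the five stages is, up to monomials and earlier denominators, one of `P, Q, R, T` or a binomial
`pairSum` of two inputs that cancels in the end. Substituting these factorisations leaves an
identity of rational functions in which those polynomials are atoms.
-/

namespace HirotaS1

/- Reading a pair `u` as the ratio `r_u = u.1 / u.2`, these are `r_u + r_v`, `r_u + r_v + r_w` and
`r_u r_v + r_u r_s + r_w r_s` with their denominators cleared. -/

def pairSum (u v : ℂ × ℂ) : ℂ := u.2 * v.1 + u.1 * v.2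

def tripleSum (u v w : ℂ × ℂ) : ℂ := u.1 * v.2 * w.2 + v.1 * u.2 * w.2 + w.1 * u.2 * v.2

def quadForm (u v w s : ℂ × ℂ) : ℂ :=
  u.1 * v.1 * w.2 * s.2 + u.1 * s.1 * v.2 * w.2 + w.1 * s.1 * u.2 * v.2

theorem _root_.hirotaS1_apply (x1 x2 y1 y2 z1 z2 t1 t2 : ℂ) :
    hirotaS1 ((x1, x2), (y1, y2), (z1, z2), (t1, t2)) =
      ((x1 * y1 * z2 / pairSum (x1, x2) (z1, z2), y2),
        (pairSum (x1, x2) (z1, z2) / z2, x2),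
        (t2 * x2 * y1 * z1 / (y2 * pairSum (x1, x2) (z1, z2)), t2),
        (t1 * x2 * z2 / (t2 * y2), z2)) :=
  rfl

theorem _root_.hirotaS1Ok_iff (x1 x2 y1 y2 z1 z2 t1 t2 : ℂ) :
    hirotaS1Ok ((x1, x2), (y1, y2), (z1, z2), (t1, t2)) ↔
      pairSum (x1, x2) (z1, z2) ≠ 0 ∧ z2 ≠ 0 ∧ y2 ≠ 0 ∧ t2 ≠ 0 :=
  Iff.rfl

abbrev State : Type :=
  (ℂ × ℂ) × (ℂ × ℂ) × (ℂ × ℂ) × (ℂ × ℂ) × (ℂ × ℂ) × (ℂ × ℂ) × (ℂ × ℂ) × (ℂ × ℂ) × (ℂ × ℂ) × (ℂ × ℂ)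

noncomputable def fourSimplexValue : State → State :=
  fun ((a1, b1), (a2, b2), (a3, b3), (a4, b4), (a5, b5), (a6, b6), (a7, b7), (a8, b8), (a9, b9),
      (a10, b10)) =>
    let P := pairSum (a4, b4) (a9, b9)
    let Q := tripleSum (a1, b1) (a3, b3) (a8, b8)
    let R := quadForm (a2, b2) (a3, b3) (a6, b6) (a8, b8)
    let T := quadForm (a1, b1) (a2, b2) (a3, b3) (a6, b6)
    ((a1 * a2 * a5 * b3 * b6 / T, b5),
     (b8 * T / (b6 * Q), b2),
     (a2 * a3 * a5 * a6 * b2 * b6 * b7 * Q / (b5 * R * T), b7),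
     (a4 * a7 * b2 * b6 * b9 / (b5 * b7 * P), b6),
     (Q / (b3 * b8), b1),
     (b1 * b4 * R / (b2 * b6 * Q), b4),
     (b1 * b3 * P / (b2 * b4 * b9), b3),
     (a5 * a6 * a8 * b2 * b3 * b10 / (b5 * R), b10),
     (a7 * a9 * b2 * b4 * b9 / (b5 * b7 * P), b9),
     (a10 * b3 * b4 * b8 / (b6 * b7 * b10), b8))

theorem lhs_eq_fourSimplexValue (p : State)
    (h1 : hirotaS1Ok (proj479X p))
    (h2 : hirotaS1Ok (proj368X (lift479X hirotaS1 p)))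
    (h3 : hirotaS1Ok (proj2589 (lift368X hirotaS1 (lift479X hirotaS1 p))))
    (h4 : hirotaS1Ok (proj1567 (lift2589 hirotaS1 (lift368X hirotaS1 (lift479X hirotaS1 p)))))
    (h5 : hirotaS1Ok (proj1234
      (lift1567 hirotaS1 (lift2589 hirotaS1 (lift368X hirotaS1 (lift479X hirotaS1 p)))))) :
    lift1234 hirotaS1
      (lift1567 hirotaS1 (lift2589 hirotaS1 (lift368X hirotaS1 (lift479X hirotaS1 p)))) =
        fourSimplexValue p := by
  obtain ⟨⟨a1, b1⟩, ⟨a2, b2⟩, ⟨a3, b3⟩, ⟨a4, b4⟩, ⟨a5, b5⟩, ⟨a6, b6⟩, ⟨a7, b7⟩, ⟨a8, b8⟩, ⟨a9, b9⟩,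
    ⟨a10, b10⟩⟩ := p
  simp only [hirotaS1_apply, hirotaS1Ok_iff, lift1234, lift1567, lift2589, lift368X, lift479X,
    proj1234, proj1567, proj2589, proj368X, proj479X] at h1 h2 h3 h4 h5 ⊢
  obtain ⟨hP, hb9, hb7, hb10⟩ := h1
  obtain ⟨h38, hb8, hb6, -⟩ := h2
  obtain ⟨hd3, -, hb5, -⟩ := h3
  obtain ⟨hd4, hb3, hb2, hb4⟩ := h4
  obtain ⟨hd5, -, -, -⟩ := h5
  have hd3_eq : pairSum (a2, b2) (b9 * b3 * a6 * a8 / (b6 * pairSum (a3, b3) (a8, b8)), b9) =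
      b9 * quadForm (a2, b2) (a3, b3) (a6, b6) (a8, b8) / (b6 * pairSum (a3, b3) (a8, b8)) := by
    simp only [pairSum] at h38 ⊢
    field_simp
    simp only [quadForm]
    ring
  have hd4_eq : pairSum (a1, b1) (pairSum (a3, b3) (a8, b8) / b8, b3) =
      tripleSum (a1, b1) (a3, b3) (a8, b8) / b8 := by
    simp only [pairSum]
    field_simp
    simp only [tripleSum]
    ring
  simp only [hd3_eq, hd4_eq] at hd3 hd4 hd5 ⊢
  have hR : quadForm (a2, b2) (a3, b3) (a6, b6) (a8, b8) ≠ 0 := fun h => hd3 (by simp [h])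
  have hQ : tripleSum (a1, b1) (a3, b3) (a8, b8) ≠ 0 := fun h => hd4 (by simp [h])
  have hd5_eq : pairSum
      (a1 * (b9 * quadForm (a2, b2) (a3, b3) (a6, b6) (a8, b8) /
          (b6 * pairSum (a3, b3) (a8, b8)) / b9) * b3 / (tripleSum (a1, b1) (a3, b3) (a8, b8) / b8),
        b2)
      (a3 * a6 * b8 / pairSum (a3, b3) (a8, b8), b6) =
      b8 * quadForm (a1, b1) (a2, b2) (a3, b3) (a6, b6) / tripleSum (a1, b1) (a3, b3) (a8, b8) := by
    simp only [pairSum] at h38 ⊢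
    field_simp
    simp only [tripleSum, quadForm]
    ring
  simp only [hd5_eq] at hd5 ⊢
  have hT : quadForm (a1, b1) (a2, b2) (a3, b3) (a6, b6) ≠ 0 := fun h => hd5 (by simp [h])
  simp only [fourSimplexValue, Prod.mk.injEq, and_true]
  split_ands <;> field_simp

theorem rhs_eq_fourSimplexValue (p : State)
    (h6 : hirotaS1Ok (proj1234 p))
    (h7 : hirotaS1Ok (proj1567 (lift1234 hirotaS1 p)))
    (h8 : hirotaS1Ok (proj2589 (lift1567 hirotaS1 (lift1234 hirotaS1 p))))
    (h9 : hirotaS1Ok (proj368X (lift2589 hirotaS1 (lift1567 hirotaS1 (lift1234 hirotaS1 p)))))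
    (h10 : hirotaS1Ok (proj479X
      (lift368X hirotaS1 (lift2589 hirotaS1 (lift1567 hirotaS1 (lift1234 hirotaS1 p)))))) :
    lift479X hirotaS1
      (lift368X hirotaS1 (lift2589 hirotaS1 (lift1567 hirotaS1 (lift1234 hirotaS1 p)))) =
        fourSimplexValue p := by
  obtain ⟨⟨a1, b1⟩, ⟨a2, b2⟩, ⟨a3, b3⟩, ⟨a4, b4⟩, ⟨a5, b5⟩, ⟨a6, b6⟩, ⟨a7, b7⟩, ⟨a8, b8⟩, ⟨a9, b9⟩,
    ⟨a10, b10⟩⟩ := p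
  simp only [hirotaS1_apply, hirotaS1Ok_iff, lift1234, lift1567, lift2589, lift368X, lift479X,
    proj1234, proj1567, proj2589, proj368X, proj479X] at h6 h7 h8 h9 h10 ⊢
  obtain ⟨h13, hb3, hb2, hb4⟩ := h6
  obtain ⟨hd2, hb6, hb5, hb7⟩ := h7
  obtain ⟨hd3, hb8, -, hb9⟩ := h8
  obtain ⟨hd4, -, -, hb10⟩ := h9
  obtain ⟨hd5, -, -, -⟩ := h10
  have hd2_eq : pairSum (a1 * a2 * b3 / pairSum (a1, b1) (a3, b3), b2) (a6, b6) =
      quadForm (a1, b1) (a2, b2) (a3, b3) (a6, b6) / pairSum (a1, b1) (a3, b3) := by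
    simp only [pairSum] at h13 ⊢
    field_simp
    simp only [quadForm]
    ring
  have hd3_eq : pairSum (pairSum (a1, b1) (a3, b3) / b3, b1) (a8, b8) =
      tripleSum (a1, b1) (a3, b3) (a8, b8) / b3 := by
    simp only [pairSum]
    field_simp
    simp only [tripleSum]
    ring
  simp only [hd2_eq, hd3_eq] at hd2 hd3 hd4 ⊢
  have hT : quadForm (a1, b1) (a2, b2) (a3, b3) (a6, b6) ≠ 0 := fun h => hd2 (by simp [h])
  have hQ : tripleSum (a1, b1) (a3, b3) (a8, b8) ≠ 0 := fun h => hd3 (by simp [h])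
  have hd4_eq : pairSum (b4 * b1 * a2 * a3 / (b2 * pairSum (a1, b1) (a3, b3)), b4)
      (b9 * b1 * (quadForm (a1, b1) (a2, b2) (a3, b3) (a6, b6) / pairSum (a1, b1) (a3, b3) / b6) *
          a8 / (b2 * (tripleSum (a1, b1) (a3, b3) (a8, b8) / b3)), b9) =
      b1 * b4 * b9 * quadForm (a2, b2) (a3, b3) (a6, b6) (a8, b8) /
        (b2 * b6 * tripleSum (a1, b1) (a3, b3) (a8, b8)) := by
    simp only [pairSum] at h13 ⊢
    field_simp
    simp only [tripleSum, quadForm]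
    ring
  have hd5_eq : pairSum (a4 * b1 * b3 / (b4 * b2), b3) (a9 * b1 * b8 / (b9 * b2), b8) =
      b1 * b3 * b8 * pairSum (a4, b4) (a9, b9) / (b2 * b4 * b9) := by
    simp only [pairSum]
    field_simp
  simp only [hd4_eq, hd5_eq] at hd4 hd5 ⊢
  have hR : quadForm (a2, b2) (a3, b3) (a6, b6) (a8, b8) ≠ 0 := fun h => hd4 (by simp [h])
  have hP : pairSum (a4, b4) (a9, b9) ≠ 0 := fun h => hd5 (by simp [h])
  have hb1 : b1 ≠ 0 := fun h => hd5 (by simp [h])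
  simp only [fourSimplexValue, Prod.mk.injEq, and_true]
  split_ands <;> field_simp

end HirotaS1

/-- The Hirota-type map `S₁` satisfies the set-theoretical 4-simplex equation,
wherever all denominators are nonzero. -/
theorem hirotaS1_four_simplex (p : (ℂ × ℂ) × (ℂ × ℂ) × (ℂ × ℂ) × (ℂ × ℂ) × (ℂ × ℂ) × (ℂ × ℂ) × (ℂ × ℂ) × (ℂ × ℂ) × (ℂ × ℂ) × (ℂ × ℂ))
    (h1 : hirotaS1Ok (proj479X p))
    (h2 : hirotaS1Ok (proj368X (lift479X hirotaS1 p)))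
    (h3 : hirotaS1Ok (proj2589 (lift368X hirotaS1 (lift479X hirotaS1 p))))
    (h4 : hirotaS1Ok (proj1567 (lift2589 hirotaS1 (lift368X hirotaS1 (lift479X hirotaS1 p)))))
    (h5 : hirotaS1Ok (proj1234 (lift1567 hirotaS1 (lift2589 hirotaS1 (lift368X hirotaS1 (lift479X hirotaS1 p))))))
    (h6 : hirotaS1Ok (proj1234 p))
    (h7 : hirotaS1Ok (proj1567 (lift1234 hirotaS1 p)))
    (h8 : hirotaS1Ok (proj2589 (lift1567 hirotaS1 (lift1234 hirotaS1 p))))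
    (h9 : hirotaS1Ok (proj368X (lift2589 hirotaS1 (lift1567 hirotaS1 (lift1234 hirotaS1 p)))))
    (h10 : hirotaS1Ok (proj479X (lift368X hirotaS1 (lift2589 hirotaS1 (lift1567 hirotaS1 (lift1234 hirotaS1 p)))))) :
    lift1234 hirotaS1 (lift1567 hirotaS1 (lift2589 hirotaS1 (lift368X hirotaS1 (lift479X hirotaS1 p))))
      = lift479X hirotaS1 (lift368X hirotaS1 (lift2589 hirotaS1 (lift1567 hirotaS1 (lift1234 hirotaS1 p)))) := by
  rw [HirotaS1.lhs_eq_fourSimplexValue p h1 h2 h3 h4 h5,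
    HirotaS1.rhs_eq_fourSimplexValue p h6 h7 h8 h9 h10]
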